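/- Fix acyclic signatures σ (on cycles) and σ* (on cocycles) of a connected finite graph G, and let T be a spanning tree. Let O⃗ = g_{σ,σ*}(T) be the orientation in which each e ∉ T is oriented according to σ(C(T,e)) and each e ∈ T according to σ*(C*(T,e)). If C⃗ ∈ ker(D) ∩ Z^E is such that every arc e⃗ ∈ C⃗ with underlying edge not in T lies in O⃗, then C⃗ is a nonnegative integer combination of σ-compatible directed cycles; in particular, if C⃗ is a directed cycle satisfying this condition, then C⃗ ∈ σ. -/

import Mathlib

open Function

namespace GB

structure Graph where
  V : Type
  E : Type
  [fV : Fintype V]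
  [fE : Fintype E]
  [dV : DecidableEq V]
  [dE : DecidableEq E]
  tail : E → V
  head : E → V

attribute [instance] Graph.fV Graph.fE Graph.dV Graph.dE

variable (G : Graph)

/-- Incidence matrix with respect to the reference orientation. -/
def incMat : Matrix G.V G.E ℝ := fun v e =>
  (if G.head e = v then 1 else 0) - (if G.tail e = v then 1 else 0)

/-- The incidence linear map. -/
noncomputable def DMap : (G.E → ℝ) →ₗ[ℝ] (G.V → ℝ) := (incMat G).mulVecLin

/-- Cycle space: kernel of the incidence matrix (equal to ker of D with a row removed). -/
noncomputable def cycleSpace : Submodule ℝ (G.E → ℝ) := LinearMap.ker (DMap G)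

/-- Cocycle space: row space of the incidence matrix (= im(D^T) for connected G). -/
noncomputable def cocycleSpace : Submodule ℝ (G.E → ℝ) :=
  LinearMap.range ((incMat G).transpose.mulVecLin)

def Connected : Prop :=
  ∀ f : G.V → ℝ, (∀ e, f (G.head e) = f (G.tail e)) → ∀ v w, f v = f w

/-- a {0,±1}-vector -/
def IsZPM (x : G.E → ℝ) : Prop := ∀ e, x e = 0 ∨ x e = 1 ∨ x e = -1

/-- A directed cycle, identified with a support-minimal nonzero {0,±1}-vector of the
cycle space (a signed circuit of the graphic matroid). -/
def IsDirCycle (x : G.E → ℝ) : Prop :=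
  x ∈ cycleSpace G ∧ x ≠ 0 ∧ IsZPM G x ∧
    ∀ y ∈ cycleSpace G, y ≠ 0 → support y ⊆ support x → support y = support x

/-- A directed cocycle (signed cocircuit). -/
def IsDirCocycle (x : G.E → ℝ) : Prop :=
  x ∈ cocycleSpace G ∧ x ≠ 0 ∧ IsZPM G x ∧
    ∀ y ∈ cocycleSpace G, y ≠ 0 → support y ⊆ support x → support y = support x

def IsCycle (C : Set G.E) : Prop := ∃ x, IsDirCycle G x ∧ support x = C
def IsCocycle (C : Set G.E) : Prop := ∃ x, IsDirCocycle G x ∧ support x = C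

/-- Orientations are identified with {0,1}-vectors, (1,…,1) being the reference orientation. -/
def IsOrientation (O : G.E → ℝ) : Prop := ∀ e, O e = 0 ∨ O e = 1

/-- the ±1 direction of edge e in orientation O -/
def dir (O : G.E → ℝ) (e : G.E) : ℝ := 2 * O e - 1

/-- the signed vector x (e.g. a directed cycle or partial orientation) is contained in O -/
def InOrient (x O : G.E → ℝ) : Prop := ∀ e, x e = 0 ∨ x e = dir G O e

def IsIntVec (x : G.E → ℝ) : Prop := ∀ e, ∃ n : ℤ, x e = (n : ℝ)

/-- x is a sum of pairwise edge-disjoint directed cycles -/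
def SumDisjDirCycles (x : G.E → ℝ) : Prop :=
  ∃ (n : ℕ) (c : Fin n → (G.E → ℝ)), (∀ i, IsDirCycle G (c i)) ∧
    (∀ i j, i ≠ j → Disjoint (support (c i)) (support (c j))) ∧ x = ∑ i, c i

/-- x is a sum of pairwise edge-disjoint directed cocycles -/
def SumDisjDirCocycles (x : G.E → ℝ) : Prop :=
  ∃ (n : ℕ) (c : Fin n → (G.E → ℝ)), (∀ i, IsDirCocycle G (c i)) ∧
    (∀ i j, i ≠ j → Disjoint (support (c i)) (support (c j))) ∧ x = ∑ i, c i

/-- A cycle signature: a choice of direction for each cycle. -/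
structure CycSig (G : Graph) where
  s : Set G.E → (G.E → ℝ)
  mem : ∀ C, IsCycle G C → IsDirCycle G (s C) ∧ support (s C) = C

/-- A cocycle signature. -/
structure CocycSig (G : Graph) where
  s : Set G.E → (G.E → ℝ)
  mem : ∀ C, IsCocycle G C → IsDirCocycle G (s C) ∧ support (s C) = C

open Classical in
/-- σ is acyclic: no nontrivial nonnegative combination of the σ(C) vanishes. -/
noncomputable def AcyclicSig (σ : CycSig G) : Prop :=
  ∀ a : Set G.E → ℝ, (∀ C, 0 ≤ a C) →
    ∑ C ∈ Finset.univ.filter (fun C => IsCycle G C), a C • σ.s C = 0 →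
    ∀ C, IsCycle G C → a C = 0

open Classical in
noncomputable def AcyclicCosig (σ : CocycSig G) : Prop :=
  ∀ a : Set G.E → ℝ, (∀ C, 0 ≤ a C) →
    ∑ C ∈ Finset.univ.filter (fun C => IsCocycle G C), a C • σ.s C = 0 →
    ∀ C, IsCocycle G C → a C = 0

/-- O is σ-compatible: every directed cycle in O is the chosen one. -/
def SigCompatible (σ : CycSig G) (O : G.E → ℝ) : Prop :=
  ∀ x, IsDirCycle G x → InOrient G x O → x = σ.s (support x)

def CosigCompatible (σ : CocycSig G) (O : G.E → ℝ) : Prop :=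
  ∀ x, IsDirCocycle G x → InOrient G x O → x = σ.s (support x)

def Compatible (σc : CycSig G) (σs : CocycSig G) (O : G.E → ℝ) : Prop :=
  SigCompatible G σc O ∧ CosigCompatible G σs O

/-- one step of cycle reversal -/
def CycRev (O O' : G.E → ℝ) : Prop :=
  ∃ x, IsDirCycle G x ∧ InOrient G x O ∧ O' = O - x

/-- cycle reversal equivalence -/
def SameCycClass : (G.E → ℝ) → (G.E → ℝ) → Prop := Relation.EqvGen (CycRev G)

/-- one step of cycle or cocycle reversal -/
def CCRev (O O' : G.E → ℝ) : Prop :=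
  ∃ x, (IsDirCycle G x ∨ IsDirCocycle G x) ∧ InOrient G x O ∧ O' = O - x

/-- cycle-cocycle reversal equivalence -/
def SameCCClass : (G.E → ℝ) → (G.E → ℝ) → Prop := Relation.EqvGen (CCRev G)

/-- x is the directed fundamental cycle of e ∉ T, directed along the reference arc of e -/
def FundCycle (T : Finset G.E) (e : G.E) (x : G.E → ℝ) : Prop :=
  IsDirCycle G x ∧ x e = 1 ∧ support x ⊆ insert e (↑T : Set G.E)

/-- x is the directed fundamental cocycle of e ∈ T -/
def FundCocycle (T : Finset G.E) (e : G.E) (x : G.E → ℝ) : Prop :=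
  IsDirCocycle G x ∧ x e = 1 ∧ support x ⊆ insert e ((↑T : Set G.E)ᶜ)

/-- T is a spanning tree: it contains no cycle and its complement contains no cocycle. -/
def IsSpanningTree (T : Finset G.E) : Prop :=
  (∀ x, IsDirCycle G x → ¬ support x ⊆ (↑T : Set G.E)) ∧
  (∀ x, IsDirCocycle G x → ¬ support x ⊆ ((↑T : Set G.E)ᶜ))

/-- O = g_{σ,σ*}(T): each e ∉ T is oriented along σ(C(T,e)), each e ∈ T along σ*(C*(T,e)). -/
def GOrient (σc : CycSig G) (σs : CocycSig G) (T : Finset G.E) (O : G.E → ℝ) : Prop :=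
  IsOrientation G O ∧
  (∀ e ∉ T, ∀ x, FundCycle G T e x → dir G O e = σc.s (support x) e) ∧
  (∀ e ∈ T, ∀ x, FundCocycle G T e x → dir G O e = σs.s (support x) e)

/-- φ_{σ,σ*}(O) = S : O is obtained from the compatible orientation O^cp = g(T) by reversing
disjoint directed cycles c i and cocycles d j, and S = T ∪ (⊎ C_i) \ (⊎ C*_j). -/
def PhiRel (σc : CycSig G) (σs : CocycSig G) (O : G.E → ℝ) (S : Set G.E) : Prop :=
  ∃ (T : Finset G.E) (Ocp : G.E → ℝ) (n m : ℕ)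
    (c : Fin n → (G.E → ℝ)) (d : Fin m → (G.E → ℝ)),
    IsSpanningTree G T ∧ Compatible G σc σs Ocp ∧ GOrient G σc σs T Ocp ∧
    (∀ i, IsDirCycle G (c i) ∧ InOrient G (c i) Ocp) ∧
    (∀ j, IsDirCocycle G (d j) ∧ InOrient G (d j) Ocp) ∧
    (∀ i j, i ≠ j → Disjoint (support (c i)) (support (c j))) ∧
    (∀ i j, i ≠ j → Disjoint (support (d i)) (support (d j))) ∧
    (∀ i j, Disjoint (support (c i)) (support (d j))) ∧
    O = Ocp - (∑ i, c i) - (∑ j, d j) ∧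
    S = ((↑T : Set G.E) ∪ (⋃ i, support (c i))) \ (⋃ j, support (d j))


/-- the cube of continuous orientations -/
def cube : Set (G.E → ℝ) := {x | ∀ e, 0 ≤ x e ∧ x e ≤ 1}

/-- x is a σ-compatible continuous orientation -/
def ContSigCompat (σ : CycSig G) (x : G.E → ℝ) : Prop :=
  x ∈ cube G ∧ ∀ ε : ℝ, 0 < ε → ∀ C, IsCycle G C → x + ε • σ.s C ∉ cube G

/-- S̃_σ = S_σ + (im(D^T) ∩ ℤ^E) -/
def Stilde (σ : CycSig G) : Set (G.E → ℝ) :=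
  {x | ∃ s, ContSigCompat G σ s ∧ ∃ v, v ∈ cocycleSpace G ∧ IsIntVec G v ∧ x = s + v}

end GB

/-!
A cycle-space vector is determined by its values off the spanning tree `T`, so
`C = ∑_{e ∉ T} C(e) • C(T,e)`, the fundamental cycles being directed along the reference arc of `e`.
By the definition of `g_{σ,σ*}(T)`, `σ(C(T,e)) = dir_O(e) • C(T,e)`, and the hypothesis on the arcs
of `C` off `T` says `C(e) = |C(e)| dir_O(e)`; hence `C = ∑_{e ∉ T} |C(e)| • σ(C(T,e))`.
If `C` is a directed cycle with `σ(C) = -C`, then `σ(C) + ∑_{e ∉ T} |C(e)| • σ(C(T,e)) = 0`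
contradicts the acyclicity of `σ`.
-/

lemma eq_abs_mul_of_pos_mul {c d : ℝ} (hd : d = 1 ∨ d = -1) (h : c ≠ 0 → 0 < c * d) :
    c = |c| * d := by
  rcases eq_or_ne c 0 with rfl | hc
  · simp
  have := h hc
  rcases hd with rfl | rfl
  · simp [abs_of_pos (by simpa using this)]
  · simp [abs_of_neg (by simpa using this)]

section Restriction

open Module

variable {ι : Type*} (P : ι → Prop) (p : Submodule ℝ (ι → ℝ))

lemma injective_restrict_of_forall_eq_zero (hp : ∀ v ∈ p, (∀ i, P i → v i = 0) → v = 0) :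
    Function.Injective ((LinearMap.funLeft ℝ ℝ (Subtype.val : {i // P i} → ι)).comp p.subtype) := by
  rw [← LinearMap.ker_eq_bot, LinearMap.ker_eq_bot']
  exact fun v hv => Subtype.ext (hp v v.2 fun i hi => congrFun hv ⟨i, hi⟩)

variable [Fintype ι] [DecidablePred P]

lemma finrank_le_card_of_forall_eq_zero (hp : ∀ v ∈ p, (∀ i, P i → v i = 0) → v = 0) :
    finrank ℝ p ≤ Fintype.card {i // P i} := by
  simpa using
    LinearMap.finrank_le_finrank_of_injective (injective_restrict_of_forall_eq_zero P p hp)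

lemma exists_mem_eq_on_of_forall_eq_zero (hp : ∀ v ∈ p, (∀ i, P i → v i = 0) → v = 0)
    (hcard : Fintype.card {i // P i} ≤ finrank ℝ p) (φ : {i // P i} → ℝ) :
    ∃ v ∈ p, ∀ i : {i // P i}, v i = φ i := by
  have hfin : finrank ℝ p = finrank ℝ ({i // P i} → ℝ) := by
    rw [finrank_fintype_fun_eq_card]
    exact (finrank_le_card_of_forall_eq_zero P p hp).antisymm hcard
  obtain ⟨v, hv⟩ := (LinearMap.injective_iff_surjective_of_finrank_eq_finrank hfin).1
    (injective_restrict_of_forall_eq_zero P p hp) φ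
  exact ⟨v, v.2, congrFun hv⟩

end Restriction

namespace GB

open Function Finset Matrix Module

variable {G : Graph}

lemma incMat_transpose_mulVec_apply (g : G.V → ℝ) (e : G.E) :
    ((incMat G)ᵀ *ᵥ g) e = g (G.head e) - g (G.tail e) := by
  simp [Matrix.mulVec, dotProduct, incMat, sub_mul, Finset.sum_sub_distrib]

lemma DMap_single (f : G.E) (s : ℝ) :
    DMap G (Pi.single f s) = Pi.single (G.head f) s - Pi.single (G.tail f) s := by
  ext w
  simp [DMap, Matrix.mulVec_single, incMat, Pi.single_apply, eq_comm, sub_mul]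

lemma sum_coboundary_mul_eq_zero {v : G.E → ℝ} (hv : v ∈ cycleSpace G) (g : G.V → ℝ) :
    ∑ e, (g (G.head e) - g (G.tail e)) * v e = 0 := by
  have h : g ⬝ᵥ (incMat G *ᵥ v) = 0 := by
    rw [show incMat G *ᵥ v = 0 from hv, dotProduct_zero]
  rw [Matrix.dotProduct_mulVec, ← Matrix.mulVec_transpose] at h
  simpa [dotProduct, incMat_transpose_mulVec_apply] using h

lemma IsZPM.add_single {x : G.E → ℝ} (hx : IsZPM G x) {f : G.E} (hf : x f = 0) {s : ℝ}
    (hs : s = 1 ∨ s = -1) : IsZPM G (x + Pi.single f s) := by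
  intro e
  by_cases he : e = f
  · subst he
    simpa [hf] using Or.inr hs
  · simpa [he] using hx e

def edgeGraph (H : Set G.E) : SimpleGraph G.V :=
  SimpleGraph.fromRel fun a b => ∃ f ∈ H, G.tail f = a ∧ G.head f = b

lemma exists_single_of_edgeGraph_adj {H : Set G.E} {u w : G.V} (h : (edgeGraph H).Adj u w) :
    ∃ f ∈ H, ∃ s : ℝ, (s = 1 ∨ s = -1) ∧
      (G.tail f = u ∧ G.head f = w ∨ G.tail f = w ∧ G.head f = u) ∧
      DMap G (Pi.single f s) = Pi.single w 1 - Pi.single u 1 := by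
  obtain ⟨-, ⟨f, hf, rfl, rfl⟩ | ⟨f, hf, rfl, rfl⟩⟩ := (SimpleGraph.fromRel_adj _ _ _).1 h
  · exact ⟨f, hf, 1, Or.inl rfl, Or.inl ⟨rfl, rfl⟩, DMap_single f 1⟩
  · refine ⟨f, hf, -1, Or.inr rfl, Or.inr ⟨rfl, rfl⟩, ?_⟩
    rw [DMap_single, Pi.single_neg, Pi.single_neg]
    abel

/-- The last condition makes the edge added in the `cons` step new: one of its ends lies off the
rest of the path. -/
lemma exists_zpm_of_isPath {H : Set G.E} {a b : G.V} (p : (edgeGraph H).Walk a b)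
    (hp : p.IsPath) :
    ∃ x, IsZPM G x ∧ support x ⊆ H ∧
      (∀ f ∈ support x, G.tail f ∈ p.support ∧ G.head f ∈ p.support) ∧
      DMap G x = Pi.single b 1 - Pi.single a 1 := by
  induction p with
  | nil => exact ⟨0, fun _ => Or.inl rfl, by simp, by simp, by simp⟩
  | @cons u w b hadj p ih =>
    rw [SimpleGraph.Walk.cons_isPath_iff] at hp
    obtain ⟨x, hx, hxH, hxp, hDx⟩ := ih hp.1
    obtain ⟨f, hfH, s, hs, hends, hDf⟩ := exists_single_of_edgeGraph_adj hadj
    have hxf : x f = 0 := by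
      by_contra hne
      obtain ⟨ht, hh⟩ := hxp f hne
      rcases hends with ⟨hu, -⟩ | ⟨-, hu⟩
      · exact hp.2 (hu ▸ ht)
      · exact hp.2 (hu ▸ hh)
    refine ⟨x + Pi.single f s, hx.add_single hxf hs, ?_, ?_, ?_⟩
    · intro e he
      by_cases hef : e = f
      · exact hef ▸ hfH
      · exact hxH (by simpa [hef] using he)
    · intro e he
      simp only [SimpleGraph.Walk.support_cons, List.mem_cons]
      by_cases hef : e = f
      · subst hef
        rcases hends with ⟨ht, hh⟩ | ⟨ht, hh⟩
        · exact ⟨Or.inl ht, Or.inr (hh ▸ p.start_mem_support)⟩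
        · exact ⟨Or.inr (ht ▸ p.start_mem_support), Or.inl hh⟩
      · obtain ⟨ht, hh⟩ := hxp e (by simpa [hef] using he)
        exact ⟨Or.inr ht, Or.inr hh⟩
    · rw [map_add, hDx, hDf]
      abel

lemma edgeGraph_reachable_head_tail {v : G.E → ℝ} (hv : v ∈ cycleSpace G) {e₀ : G.E}
    (he₀ : v e₀ ≠ 0) : (edgeGraph (support v \ {e₀})).Reachable (G.head e₀) (G.tail e₀) := by
  classical
  -- otherwise the net flow of `v` out of the vertices reachable from `head e₀` would be `v e₀`
  set R : G.V → Prop := (edgeGraph (support v \ {e₀})).Reachable (G.head e₀)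
  by_contra hR
  have hsum := sum_coboundary_mul_eq_zero hv fun u => if R u then 1 else 0
  rw [Finset.sum_eq_single e₀] at hsum
  · simp [R, hR] at hsum
    exact he₀ hsum
  · intro e _ he
    by_cases hve : v e = 0
    · simp [hve]
    by_cases hloop : G.head e = G.tail e
    · simp [hloop]
    have hadj : (edgeGraph (support v \ {e₀})).Adj (G.tail e) (G.head e) :=
      (SimpleGraph.fromRel_adj _ _ _).2 ⟨Ne.symm hloop, Or.inl ⟨e, ⟨hve, he⟩, rfl, rfl⟩⟩
    have hiff : R (G.head e) ↔ R (G.tail e) :=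
      ⟨fun h => h.trans hadj.symm.reachable, fun h => h.trans hadj.reachable⟩
    simp [hiff]
  · simp

lemma exists_zpm_mem_cycleSpace {v : G.E → ℝ} (hv : v ∈ cycleSpace G) {e₀ : G.E}
    (he₀ : v e₀ ≠ 0) : ∃ z ∈ cycleSpace G, IsZPM G z ∧ z e₀ = 1 ∧ support z ⊆ support v := by
  obtain ⟨p⟩ := edgeGraph_reachable_head_tail hv he₀
  obtain ⟨x, hx, hxH, -, hDx⟩ := exists_zpm_of_isPath p.bypass p.bypass_isPath
  have hxe₀ : x e₀ = 0 := notMem_support.1 fun h => (hxH h).2 rfl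
  refine ⟨x + Pi.single e₀ 1, ?_, hx.add_single hxe₀ (Or.inl rfl), by simp [hxe₀], ?_⟩
  · change DMap G _ = 0
    rw [map_add, hDx, DMap_single]
    abel
  · intro e he
    by_cases hee₀ : e = e₀
    · exact hee₀ ▸ he₀
    · exact (hxH (by simpa [hee₀] using he)).1

lemma exists_zpm_mem_cocycleSpace {v : G.E → ℝ} (hv : v ∈ cocycleSpace G) {e₀ : G.E}
    (he₀ : v e₀ ≠ 0) : ∃ z ∈ cocycleSpace G, IsZPM G z ∧ z e₀ ≠ 0 ∧ support z ⊆ support v := by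
  classical
  obtain ⟨g, rfl⟩ := hv
  simp only [mulVecLin_apply, incMat_transpose_mulVec_apply, ne_eq, sub_eq_zero] at he₀
  -- the coboundary of the level set `{g ≥ t}`, `t` the larger value of `g` at the ends of `e₀`
  set t := max (g (G.head e₀)) (g (G.tail e₀))
  let χ : G.V → ℝ := fun u => if t ≤ g u then 1 else 0
  refine ⟨(incMat G)ᵀ *ᵥ χ, ⟨χ, rfl⟩, fun e => ?_, ?_, fun e he => ?_⟩
  · simp only [incMat_transpose_mulVec_apply, χ]
    split_ifs <;> norm_num
  · simp only [incMat_transpose_mulVec_apply, χ]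
    rcases lt_or_gt_of_ne he₀ with h | h
    · simp [t, max_eq_right h.le, h.not_ge]
    · simp [t, max_eq_left h.le, h.not_ge]
  · simp only [mem_support, mulVecLin_apply, incMat_transpose_mulVec_apply, ne_eq,
      sub_eq_zero] at he ⊢
    exact fun h => he (by simp [χ, h])

lemma exists_minimal_zpm (p : Submodule ℝ (G.E → ℝ))
    (hp : ∀ v ∈ p, v ≠ 0 → ∃ z ∈ p, z ≠ 0 ∧ IsZPM G z ∧ support z ⊆ support v)
    {w : G.E → ℝ} (hw : w ∈ p) (hw₀ : w ≠ 0) :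
    ∃ z, (z ∈ p ∧ z ≠ 0 ∧ IsZPM G z ∧
      ∀ y ∈ p, y ≠ 0 → support y ⊆ support z → support y = support z) ∧
      support z ⊆ support w := by
  obtain ⟨z₀, hz₀⟩ := hp w hw hw₀
  obtain ⟨z, ⟨hz, hz0, hzz, hzw⟩, hmin⟩ := (InvImage.wf support wellFounded_lt).has_min
    {z | z ∈ p ∧ z ≠ 0 ∧ IsZPM G z ∧ support z ⊆ support w} ⟨z₀, hz₀⟩
  refine ⟨z, ⟨hz, hz0, hzz, fun y hy hy0 hyz => hyz.antisymm ?_⟩, hzw⟩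
  obtain ⟨z', hz', hz'0, hz'z, hz'y⟩ := hp y hy hy0
  rcases (hz'y.trans hyz).eq_or_ssubset with h | h
  · exact h ▸ hz'y
  · exact absurd h (hmin z' ⟨hz', hz'0, hz'z, hz'y.trans (hyz.trans hzw)⟩)

lemma exists_isDirCycle_support_subset {w : G.E → ℝ} (hw : w ∈ cycleSpace G) (hw₀ : w ≠ 0) :
    ∃ z, IsDirCycle G z ∧ support z ⊆ support w := by
  refine exists_minimal_zpm _ (fun v hv hv₀ => ?_) hw hw₀
  obtain ⟨e, he⟩ := Function.ne_iff.1 hv₀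
  obtain ⟨z, hz, hzz, hze, hzv⟩ := exists_zpm_mem_cycleSpace hv he
  exact ⟨z, hz, fun h => by simp [h] at hze, hzz, hzv⟩

lemma exists_isDirCocycle_support_subset {w : G.E → ℝ} (hw : w ∈ cocycleSpace G)
    (hw₀ : w ≠ 0) : ∃ z, IsDirCocycle G z ∧ support z ⊆ support w := by
  refine exists_minimal_zpm _ (fun v hv hv₀ => ?_) hw hw₀
  obtain ⟨e, he⟩ := Function.ne_iff.1 hv₀
  obtain ⟨z, hz, hzz, hze, hzv⟩ := exists_zpm_mem_cocycleSpace hv he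
  exact ⟨z, hz, fun h => by simp [h] at hze, hzz, hzv⟩

lemma finrank_cycleSpace_add_finrank_cocycleSpace :
    finrank ℝ (cycleSpace G) + finrank ℝ (cocycleSpace G) = Fintype.card G.E := by
  have h := LinearMap.finrank_range_add_finrank_ker (DMap G)
  have hrank : finrank ℝ (cocycleSpace G) = finrank ℝ (LinearMap.range (DMap G)) :=
    rank_transpose (incMat G)
  rw [finrank_fintype_fun_eq_card] at h
  rw [hrank, cycleSpace]
  omega

lemma IsDirCycle.neg {x : G.E → ℝ} (hx : IsDirCycle G x) : IsDirCycle G (-x) := by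
  obtain ⟨hxC, hx0, hxz, hxmin⟩ := hx
  refine ⟨neg_mem hxC, neg_ne_zero.2 hx0, fun e => ?_, by simpa [support_neg] using hxmin⟩
  rcases hxz e with h | h | h <;> simp [h]

lemma IsDirCycle.eq_smul_of_support_subset {x y : G.E → ℝ} (hx : IsDirCycle G x)
    (hy : y ∈ cycleSpace G) (hyx : support y ⊆ support x) : ∃ c : ℝ, y = c • x := by
  obtain ⟨e, he⟩ : ∃ e, x e ≠ 0 := Function.ne_iff.1 hx.2.1
  refine ⟨y e / x e, by_contra fun hne => ?_⟩
  have hd : y - (y e / x e) • x ∈ cycleSpace G := sub_mem hy (Submodule.smul_mem _ _ hx.1)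
  have hdx : support (y - (y e / x e) • x) ⊆ support x := fun f hf => by
    by_contra hxf
    simp only [mem_support, not_not] at hxf
    exact hf (by simp [hxf, notMem_support.1 fun h => hyx h hxf])
  have hde : e ∉ support (y - (y e / x e) • x) := by simp [div_mul_cancel₀ _ he]
  exact hde (hx.2.2.2 _ hd (sub_ne_zero.2 hne) hdx ▸ he)

lemma CycSig.s_support_eq_or_eq_neg (σ : CycSig G) {x : G.E → ℝ} (hx : IsDirCycle G x) :
    σ.s (support x) = x ∨ σ.s (support x) = -x := by
  obtain ⟨hσ, hσx⟩ := σ.mem _ ⟨x, hx, rfl⟩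
  obtain ⟨c, hc⟩ := hx.eq_smul_of_support_subset hσ.1 hσx.le
  obtain ⟨e, he⟩ := Function.ne_iff.1 hx.2.1
  have hσe : σ.s (support x) e ≠ 0 := by rw [← mem_support, hσx]; exact he
  have hce := congrFun hc e
  simp only [Pi.smul_apply, smul_eq_mul] at hce
  have hc1 : c = 1 ∨ c = -1 := by
    rcases hx.2.2.1 e with h | h | h <;> rcases hσ.2.2.1 e with h' | h' | h' <;>
      simp_all
  rcases hc1 with rfl | rfl
  · exact Or.inl (by simpa using hc)
  · exact Or.inr (by simpa using hc)

lemma IsOrientation.dir_eq {O : G.E → ℝ} (hO : IsOrientation G O) (e : G.E) :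
    dir G O e = 1 ∨ dir G O e = -1 := by
  rcases hO e with h | h <;> norm_num [dir, h]

lemma FundCycle.apply_eq_zero {T : Finset G.E} {e f : G.E} {x : G.E → ℝ}
    (hx : FundCycle G T e x) (hf : f ∉ T) (hfe : f ≠ e) : x f = 0 :=
  notMem_support.1 fun h => (hx.2.2 h).elim hfe hf

namespace IsSpanningTree

variable {T : Finset G.E}

lemma eq_zero_of_mem_cycleSpace (hT : IsSpanningTree G T) {y : G.E → ℝ}
    (hy : y ∈ cycleSpace G) (hyT : ∀ e ∉ T, y e = 0) : y = 0 := by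
  by_contra hy₀
  obtain ⟨z, hz, hzy⟩ := exists_isDirCycle_support_subset hy hy₀
  exact hT.1 z hz fun e he => by_contra fun heT => hzy he (hyT e heT)

lemma eq_zero_of_mem_cocycleSpace (hT : IsSpanningTree G T) {y : G.E → ℝ}
    (hy : y ∈ cocycleSpace G) (hyT : ∀ e ∈ T, y e = 0) : y = 0 := by
  by_contra hy₀
  obtain ⟨z, hz, hzy⟩ := exists_isDirCocycle_support_subset hy hy₀
  exact hT.2 z hz fun e he heT => hzy he (hyT e heT)

/-- Restricting the cycle space to `Tᶜ` and the cocycle space to `T` is injective; as the two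
dimensions add up to `|E|`, the first restriction is also onto. -/
lemma exists_mem_cycleSpace (hT : IsSpanningTree G T) {e : G.E} (he : e ∉ T) :
    ∃ y ∈ cycleSpace G, y e = 1 ∧ support y ⊆ insert e ↑T := by
  classical
  have hcocyc : finrank ℝ (cocycleSpace G) ≤ #T := by
    simpa using finrank_le_card_of_forall_eq_zero (· ∈ T) _
      fun y hy => hT.eq_zero_of_mem_cocycleSpace hy
  have hcard : Fintype.card {f // f ∉ T} + #T = Fintype.card G.E := by
    rw [Fintype.card_subtype_compl, Fintype.card_coe, Nat.sub_add_cancel T.card_le_univ]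
  have := finrank_cycleSpace_add_finrank_cocycleSpace (G := G)
  obtain ⟨y, hy, hyφ⟩ := exists_mem_eq_on_of_forall_eq_zero (· ∉ T) _
    (fun y hy => hT.eq_zero_of_mem_cycleSpace hy) (by omega) (Pi.single ⟨e, he⟩ 1)
  refine ⟨y, hy, by simpa using hyφ ⟨e, he⟩, fun f hf => ?_⟩
  by_contra hfeT
  simp only [Set.mem_insert_iff, Finset.mem_coe, not_or] at hfeT
  have := hyφ ⟨f, hfeT.2⟩
  simp [hfeT.1] at this
  exact hf this

lemma exists_fundCycle (hT : IsSpanningTree G T) {e : G.E} (he : e ∉ T) :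
    ∃ x, FundCycle G T e x := by
  obtain ⟨y, hy, hye, hyT⟩ := hT.exists_mem_cycleSpace he
  obtain ⟨z, hz, hzy⟩ := exists_isDirCycle_support_subset hy fun h => by simp [h] at hye
  have hzT := hzy.trans hyT
  have hze : z e ≠ 0 := fun h => hT.1 z hz fun f hf =>
    (hzT hf).resolve_left fun hfe => hfe ▸ hf <| h
  rcases hz.2.2.1 e with h | h | h
  · exact absurd h hze
  · exact ⟨z, hz, h, hzT⟩
  · exact ⟨-z, hz.neg, by simp [h], by rwa [support_neg]⟩

lemma eq_sum_fundCycle (hT : IsSpanningTree G T)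
    {Y : {e // e ∉ T} → G.E → ℝ} (hY : ∀ e : {e // e ∉ T}, FundCycle G T e (Y e)) {C : G.E → ℝ}
    (hC : C ∈ cycleSpace G) : C = ∑ e : {e // e ∉ T}, C e • Y e := by
  rw [← sub_eq_zero]
  refine hT.eq_zero_of_mem_cycleSpace
    (sub_mem hC (sum_mem fun e _ => Submodule.smul_mem _ _ (hY e).1.1)) fun f hf => ?_
  rw [Pi.sub_apply, Finset.sum_apply, Finset.sum_eq_single ⟨f, hf⟩]
  · simp [(hY _).2.1]
  · intro e _ hef
    simp [(hY e).apply_eq_zero hf fun h => hef (Subtype.ext h.symm)]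
  · simp

end IsSpanningTree

lemma GOrient.s_support_fundCycle {σc : CycSig G} {σs : CocycSig G} {T : Finset G.E}
    {O : G.E → ℝ} (hO : GOrient G σc σs T O) {e : G.E} (he : e ∉ T) {x : G.E → ℝ}
    (hx : FundCycle G T e x) : σc.s (support x) = dir G O e • x := by
  rw [hO.2.1 e he x hx]
  rcases σc.s_support_eq_or_eq_neg hx.1 with h | h <;> rw [h] <;> simp [hx.2.1]

lemma AcyclicSig.eq_zero_of_sum_smul_eq_zero {σ : CycSig G} (hσ : AcyclicSig G σ)
    {ι : Type*} [Fintype ι] {S : ι → Set G.E} (hS : ∀ i, IsCycle G (S i)) {a : ι → ℝ}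
    (ha : ∀ i, 0 ≤ a i) (hsum : ∑ i, a i • σ.s (S i) = 0) (i : ι) : a i = 0 := by
  classical
  have hfiber : ∑ C ∈ univ.filter (IsCycle G), (∑ j with S j = C, a j) • σ.s C = 0 := by
    rw [← hsum, ← sum_fiberwise_of_maps_to (g := S) (t := univ.filter (IsCycle G))
      (fun j _ => by simp [hS j])]
    refine sum_congr rfl fun C _ => ?_
    rw [sum_smul]
    exact sum_congr rfl fun j hj => by rw [(mem_filter.1 hj).2]
  have := hσ _ (fun C => sum_nonneg fun j _ => ha j) hfiber (S i) (hS i)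
  exact (sum_eq_zero_iff_of_nonneg fun j _ => ha j).1 this i (by simp)

end GB

open GB in
theorem stmt_8_general (G : GB.Graph)
    (σc : GB.CycSig G) (σs : GB.CocycSig G)
    (hac : GB.AcyclicSig G σc)
    (T : Finset G.E) (hT : GB.IsSpanningTree G T)
    (O : G.E → ℝ) (hO : GB.GOrient G σc σs T O)
    (C : G.E → ℝ) (hC : C ∈ GB.cycleSpace G) (hCint : GB.IsIntVec G C)
    (harc : ∀ e ∉ T, C e ≠ 0 → 0 < C e * GB.dir G O e) :
    (∃ (n : ℕ) (c : Fin n → (G.E → ℝ)) (a : Fin n → ℕ),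
      (∀ i, GB.IsDirCycle G (c i) ∧ c i = σc.s (Function.support (c i))) ∧
      C = ∑ i, (a i : ℝ) • c i) ∧
    (GB.IsDirCycle G C → C = σc.s (Function.support C)) := by
  choose Y hY using fun e : {e // e ∉ T} => hT.exists_fundCycle e.2
  have hcyc : ∀ e, IsCycle G (support (Y e)) := fun e => ⟨Y e, (hY e).1, rfl⟩
  have hdecomp : C = ∑ e : {e // e ∉ T}, |C e| • σc.s (support (Y e)) := by
    refine (hT.eq_sum_fundCycle hY hC).trans (Finset.sum_congr rfl fun e _ => ?_)
    rw [hO.s_support_fundCycle e.2 (hY e), smul_smul,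
      ← eq_abs_mul_of_pos_mul (hO.1.dir_eq e) (harc e e.2)]
  refine ⟨?_, fun hCdir => ?_⟩
  · choose n hn using hCint
    let ι := Fintype.equivFin {e // e ∉ T}
    refine ⟨_, fun i => σc.s (support (Y (ι.symm i))), fun i => (n (ι.symm i)).natAbs,
      fun i => ⟨(σc.mem _ (hcyc _)).1, by rw [(σc.mem _ (hcyc _)).2]⟩, ?_⟩
    rw [hdecomp, ← ι.symm.sum_comp]
    simp [hn, Nat.cast_natAbs]
  · rcases σc.s_support_eq_or_eq_neg hCdir with h | h
    · exact h.symm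
    have := hac.eq_zero_of_sum_smul_eq_zero (ι := Option {e // e ∉ T})
      (S := fun i => i.elim (support C) fun e => support (Y e))
      (a := fun i => i.elim 1 fun e => |C e|)
      (fun i => i.rec ⟨C, hCdir, rfl⟩ hcyc) (fun i => i.rec zero_le_one fun _ => abs_nonneg _)
      (by simp [Fintype.sum_option, h, ← hdecomp]) none
    exact absurd this one_ne_zero

open GB in
theorem stmt_8 (G : GB.Graph) (hconn : GB.Connected G)
    (σc : GB.CycSig G) (σs : GB.CocycSig G)
    (hac : GB.AcyclicSig G σc) (hacs : GB.AcyclicCosig G σs)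
    (T : Finset G.E) (hT : GB.IsSpanningTree G T)
    (O : G.E → ℝ) (hO : GB.GOrient G σc σs T O)
    (C : G.E → ℝ) (hC : C ∈ GB.cycleSpace G) (hCint : GB.IsIntVec G C)
    (harc : ∀ e ∉ T, C e ≠ 0 → 0 < C e * GB.dir G O e) :
    (∃ (n : ℕ) (c : Fin n → (G.E → ℝ)) (a : Fin n → ℕ),
      (∀ i, GB.IsDirCycle G (c i) ∧ c i = σc.s (Function.support (c i))) ∧
      C = ∑ i, (a i : ℝ) • c i) ∧
    (GB.IsDirCycle G C → C = σc.s (Function.support C)) :=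
  stmt_8_general G σc σs hac T hT O hO C hC hCint harc
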